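/- Let κ > 0, let k ≥ 1 and n_1,…,n_k be positive integers with n = n_1+⋯+n_k, and for ω ≥ 1 define p_B(n_1,…,n_k; ω, κ) = κ^k ∫_0^∞ (u^{n−1}/Γ(n)) ( (ω + √(ω^2 − 1)) / (ω + u + √((ω+u)^2 − 1)) )^κ (u+ω)^{−n} ∏_{j=1}^k Γ(n_j) · ₂F₁( n_j/2, (n_j+1)/2; 1; 1/(u+ω)^2 ) du. Then lim_{ω→+∞} p_B(n_1,…,n_k; ω, κ) = (Γ(κ)/Γ(κ+n)) κ^k ∏_{j=1}^k Γ(n_j), the eppf of the Dirichlet process with total mass κ. -/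

import Mathlib

/-!
Substituting `u = ω v`, the integral becomes
`∫₀^∞ v^(n-1) (1+v)^(-(n+κ)) / Γ(n) · (q(ω) / q(ω(1+v)))^κ · h(1 / (ω(1+v))²) dv`,
where `q(x) = (x + √(x² - 1)) / x` and `h(z) = ∏ⱼ Γ(nⱼ) ₂F₁(nⱼ/2, (nⱼ+1)/2; 1; z)`.
Since `1 ≤ q ≤ 2` and `q(x) → 2`, the ratio of the `q`'s stays below `2` and tends to `1`,
while `h` is continuous near `0` (the series has radius of convergence `1`) with `h(0) = ∏ⱼ Γ(nⱼ)`.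
Dominated convergence reduces the limit to the Beta integral
`∫₀^∞ v^(n-1) (1+v)^(-(n+κ)) dv = Γ(n) Γ(κ) / Γ(n+κ)`.
-/

open MeasureTheory Set Filter Topology

/-- The Pochhammer symbol `(x)_m = Γ(x + m) / Γ(x)`. -/
noncomputable def poch (x : ℝ) (m : ℕ) : ℝ := Real.Gamma (x + m) / Real.Gamma x

/-- The Gauss hypergeometric series `₂F₁(a, b; 1; z) = Σ_m (a)_m (b)_m / ((1)_m m!) z^m`. -/
noncomputable def hyp2F1one (a b z : ℝ) : ℝ :=
  ∑' m : ℕ, (poch a m * poch b m / (poch 1 m * (Nat.factorial m : ℝ))) * z ^ m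

open Real
open scoped Nat

theorem poch_eq_ascPochhammer_eval {x : ℝ} (hx : ∀ k : ℕ, x ≠ -k) (m : ℕ) :
    poch x m = (ascPochhammer ℝ m).eval x := by
  induction m with
  | zero => simp [poch, Real.Gamma_ne_zero hx]
  | succ m ih =>
    have hxm : x + m ≠ 0 := fun h => hx m (by linarith)
    rw [ascPochhammer_succ_eval, ← ih, poch, poch, Nat.cast_succ, ← add_assoc,
      Real.Gamma_add_one hxm]
    ring

theorem hyp2F1one_eq_ordinaryHypergeometric {a b : ℝ} (ha : ∀ k : ℕ, a ≠ -k)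
    (hb : ∀ k : ℕ, b ≠ -k) (z : ℝ) : hyp2F1one a b z = ₂F₁ a b 1 z := by
  have h1 : ∀ k : ℕ, (1 : ℝ) ≠ -k := fun k => by linarith [k.cast_nonneg (α := ℝ)]
  rw [ordinaryHypergeometric, ordinaryHypergeometric_sum_eq, hyp2F1one]
  congr with m
  rw [poch_eq_ascPochhammer_eval ha, poch_eq_ascPochhammer_eval hb, poch_eq_ascPochhammer_eval h1,
    ascPochhammer_eval_one, smul_eq_mul]
  field_simp

theorem continuousOn_hyp2F1one {a b : ℝ} (ha : ∀ k : ℕ, a ≠ -k) (hb : ∀ k : ℕ, b ≠ -k) :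
    ContinuousOn (hyp2F1one a b) (Metric.ball 0 1) := by
  have hrad : (ordinaryHypergeometricSeries ℝ a b (1 : ℝ)).radius = 1 :=
    ordinaryHypergeometricSeries_radius_eq_one ℝ a b 1 fun k =>
      ⟨fun h => ha k (by linarith), fun h => hb k (by linarith),
        fun h => by linarith [k.cast_nonneg (α := ℝ)]⟩
  have := (ordinaryHypergeometricSeries ℝ a b (1 : ℝ)).continuousOn
  rw [hrad, ← ENNReal.ofReal_one, Metric.eball_ofReal] at this
  rw [funext (hyp2F1one_eq_ordinaryHypergeometric ha hb)]
  exact this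

theorem hyp2F1one_zero {a b : ℝ} (ha : ∀ k : ℕ, a ≠ -k) (hb : ∀ k : ℕ, b ≠ -k) :
    hyp2F1one a b 0 = 1 := by
  rw [hyp2F1one_eq_ordinaryHypergeometric ha hb, ordinaryHypergeometric_zero]

/-- For `x ≥ 1`, `x + √(x ^ 2 - 1) = exp (arcosh x)` (`Real.exp_arcosh`). -/
noncomputable def expArcoshDiv (x : ℝ) : ℝ := (x + √(x ^ 2 - 1)) / x

theorem expArcoshDiv_le_two {x : ℝ} (hx : 0 < x) : expArcoshDiv x ≤ 2 := by
  have : √(x ^ 2 - 1) ≤ x := Real.sqrt_le_iff.2 ⟨hx.le, by linarith⟩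
  rw [expArcoshDiv, div_le_iff₀ hx]
  linarith

theorem one_le_expArcoshDiv {x : ℝ} (hx : 0 < x) : 1 ≤ expArcoshDiv x := by
  rw [expArcoshDiv, le_div_iff₀ hx]
  linarith [Real.sqrt_nonneg (x ^ 2 - 1)]

theorem continuousOn_expArcoshDiv : ContinuousOn expArcoshDiv (Ioi 0) :=
  ((continuous_id.add (continuous_id.pow 2 |>.sub continuous_const).sqrt).continuousOn).div
    continuousOn_id fun _ hx => (mem_Ioi.1 hx).ne'

theorem tendsto_expArcoshDiv_atTop : Tendsto expArcoshDiv atTop (𝓝 2) := by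
  have hlim : Tendsto (fun x : ℝ => 1 + √(1 - (x⁻¹) ^ 2)) atTop (𝓝 (1 + √(1 - 0 ^ 2))) :=
    tendsto_const_nhds.add ((tendsto_const_nhds.sub (tendsto_inv_atTop_zero.pow 2)).sqrt)
  norm_num at hlim
  refine hlim.congr' ?_
  filter_upwards [eventually_gt_atTop 0] with x hx
  rw [expArcoshDiv, add_div, div_self hx.ne', ← Real.sqrt_sq hx.le,
    ← Real.sqrt_div' _ (sq_nonneg x), Real.sqrt_sq hx.le]
  congr 2
  field_simp

theorem tendsto_expArcoshDiv_div_expArcoshDiv_mul {t : ℝ} (ht : 0 < t) :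
    Tendsto (fun x => expArcoshDiv x / expArcoshDiv (x * t)) atTop (𝓝 1) := by
  have h := tendsto_expArcoshDiv_atTop.div
    (tendsto_expArcoshDiv_atTop.comp (tendsto_id.atTop_mul_const ht)) two_ne_zero
  rwa [div_self two_ne_zero] at h

theorem one_div_sq_mem_Icc {c y : ℝ} (hc : 0 < c) (hy : 1 ≤ y) (hyc : c⁻¹ ≤ y) :
    1 / y ^ 2 ∈ Icc 0 c := by
  refine ⟨by positivity, ?_⟩
  rw [div_le_iff₀ (by positivity)]
  have := (inv_le_iff_one_le_mul₀ hc).1 hyc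
  nlinarith

theorem pow_mul_one_add_rpow_sub_le {v : ℝ} (hv : 0 ≤ v) (j : ℕ) (e : ℝ) :
    v ^ j * (1 + v) ^ (e - j) ≤ (1 + v) ^ e := by
  have h1v : 0 < 1 + v := by linarith
  rw [Real.rpow_sub h1v, Real.rpow_natCast, mul_div_left_comm]
  exact mul_le_of_le_one_right (by positivity)
    ((div_le_one (by positivity)).2 (pow_le_pow_left₀ hv (by linarith) j))

theorem tendsto_one_add_rpow_neg_atTop {s : ℝ} (hs : 0 < s) :
    Tendsto (fun v : ℝ => (1 + v) ^ (-s)) atTop (𝓝 0) :=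
  (tendsto_rpow_neg_atTop hs).comp (tendsto_atTop_add_const_left _ 1 tendsto_id)

theorem hasDerivAt_one_add_rpow (e : ℝ) {v : ℝ} (hv : 0 ≤ v) :
    HasDerivAt (fun v : ℝ => (1 + v) ^ e) (e * (1 + v) ^ (e - 1)) v := by
  simpa using ((hasDerivAt_id v).const_add 1).rpow_const (p := e)
    (Or.inl (show 1 + v ≠ 0 by linarith))

theorem hasDerivAt_neg_one_add_rpow_neg_div {s : ℝ} (hs : s ≠ 0) {v : ℝ} (hv : 0 ≤ v) :
    HasDerivAt (fun v : ℝ => -(1 + v) ^ (-s) / s) ((1 + v) ^ (-(1 + s))) v := by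
  refine ((hasDerivAt_one_add_rpow (-s) hv).neg.div_const s).congr_deriv ?_
  rw [show -s - 1 = -(1 + s) by ring]
  field_simp

theorem integrableOn_one_add_rpow_neg {s : ℝ} (hs : 0 < s) :
    IntegrableOn (fun v : ℝ => (1 + v) ^ (-(1 + s))) (Ioi 0) :=
  integrableOn_Ioi_deriv_of_nonneg' (fun _ hv => hasDerivAt_neg_one_add_rpow_neg_div hs.ne' hv)
    (fun v hv => Real.rpow_nonneg (by linarith [mem_Ioi.1 hv]) _)
    (by simpa using ((tendsto_one_add_rpow_neg_atTop hs).neg).div_const s)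

theorem integral_one_add_rpow_neg {s : ℝ} (hs : 0 < s) :
    ∫ v in Ioi (0 : ℝ), (1 + v) ^ (-(1 + s)) = s⁻¹ := by
  rw [integral_Ioi_of_hasDerivAt_of_nonneg'
    (fun _ hv => hasDerivAt_neg_one_add_rpow_neg_div hs.ne' hv)
    (fun v hv => Real.rpow_nonneg (by linarith [mem_Ioi.1 hv]) _)
    (by simpa using ((tendsto_one_add_rpow_neg_atTop hs).neg).div_const s)]
  simp [div_eq_mul_inv]

theorem continuousOn_pow_mul_one_add_rpow (m : ℕ) (e : ℝ) :
    ContinuousOn (fun v : ℝ => v ^ m * (1 + v) ^ e) (Ioi 0) := fun v hv =>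
  ((continuousAt_id.pow m).mul ((continuousAt_const.add continuousAt_id).rpow_const
    (Or.inl (show 1 + v ≠ 0 by linarith [mem_Ioi.1 hv])))).continuousWithinAt

theorem integrableOn_pow_mul_one_add_rpow (m : ℕ) {s : ℝ} (hs : 0 < s) :
    IntegrableOn (fun v : ℝ => v ^ m * (1 + v) ^ (-(m + 1 + s))) (Ioi 0) := by
  refine (integrableOn_one_add_rpow_neg hs).mono' ?_ ?_
  · exact (continuousOn_pow_mul_one_add_rpow m _).aestronglyMeasurable measurableSet_Ioi
  · filter_upwards [ae_restrict_mem measurableSet_Ioi] with v hv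
    have hv : 0 ≤ v := le_of_lt hv
    rw [Real.norm_of_nonneg (by positivity), show -(m + 1 + s) = -(1 + s) - m by ring]
    exact pow_mul_one_add_rpow_sub_le hv m _

theorem integral_pow_succ_mul_one_add_rpow (m : ℕ) {s : ℝ} (hs : 0 < s) :
    (m + 1 + s) * ∫ v in Ioi (0 : ℝ), v ^ (m + 1) * (1 + v) ^ (-(((m + 1 : ℕ) : ℝ) + 1 + s)) =
      (m + 1) * ∫ v in Ioi (0 : ℝ), v ^ m * (1 + v) ^ (-(m + 1 + s)) := by
  have hderiv : ∀ x ∈ Ici (0 : ℝ), HasDerivAt (fun v : ℝ => v ^ (m + 1) * (1 + v) ^ (-(m + 1 + s)))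
      ((m + 1) * (x ^ m * (1 + x) ^ (-(m + 1 + s))) -
        (m + 1 + s) * (x ^ (m + 1) * (1 + x) ^ (-(((m + 1 : ℕ) : ℝ) + 1 + s)))) x := by
    intro x hx
    refine ((hasDerivAt_pow (m + 1) x).mul
      (hasDerivAt_one_add_rpow (-(m + 1 + s)) hx)).congr_deriv ?_
    rw [show -((m : ℝ) + 1 + s) - 1 = -(((m + 1 : ℕ) : ℝ) + 1 + s) by push_cast; ring]
    push_cast
    ring
  have hbdry : Tendsto (fun v : ℝ => v ^ (m + 1) * (1 + v) ^ (-(m + 1 + s))) atTop (𝓝 0) := by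
    refine tendsto_of_tendsto_of_tendsto_of_le_of_le' tendsto_const_nhds
      (tendsto_one_add_rpow_neg_atTop hs) ?_ ?_
    all_goals filter_upwards [eventually_ge_atTop 0] with v hv
    · have : 0 < 1 + v := by linarith
      positivity
    · have := pow_mul_one_add_rpow_sub_le hv (m + 1) (-s)
      rwa [show -s - ((m + 1 : ℕ) : ℝ) = -(m + 1 + s) by push_cast; ring] at this
  have hint_m := (integrableOn_pow_mul_one_add_rpow m hs).const_mul ((m : ℝ) + 1)
  have hint_succ := (integrableOn_pow_mul_one_add_rpow (m + 1) hs).const_mul ((m : ℝ) + 1 + s)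
  have key := integral_Ioi_of_hasDerivAt_of_tendsto' hderiv (hint_m.sub hint_succ) hbdry
  rw [integral_sub hint_m hint_succ, integral_const_mul, integral_const_mul,
    zero_pow m.succ_ne_zero, zero_mul, sub_zero, sub_eq_zero] at key
  exact key.symm

theorem integral_pow_mul_one_add_rpow (m : ℕ) {s : ℝ} (hs : 0 < s) :
    ∫ v in Ioi (0 : ℝ), v ^ m * (1 + v) ^ (-(m + 1 + s)) = m ! * Gamma s / Gamma (m + 1 + s) := by
  induction m with
  | zero =>
    simp only [pow_zero, one_mul, Nat.cast_zero, zero_add, Nat.factorial_zero, Nat.cast_one]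
    rw [integral_one_add_rpow_neg hs, add_comm 1 s, Real.Gamma_add_one hs.ne']
    field_simp [(Real.Gamma_pos_of_pos hs).ne']
  | succ m ih =>
    have hms : 0 < (m : ℝ) + 1 + s := by positivity
    have hΓ : Gamma (((m + 1 : ℕ) : ℝ) + 1 + s) = (m + 1 + s) * Gamma (m + 1 + s) := by
      rw [← Real.Gamma_add_one hms.ne']
      push_cast
      ring_nf
    have hrec := integral_pow_succ_mul_one_add_rpow m hs
    rw [ih] at hrec
    rw [hΓ, Nat.factorial_succ, eq_div_iff (mul_pos hms (Real.Gamma_pos_of_pos hms)).ne',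
      ← mul_assoc, mul_comm _ (_ + _ + _), hrec]
    push_cast
    field_simp [(Real.Gamma_pos_of_pos hms).ne']

/-- The integrand of `p_B(n_1,…,n_k; ω, κ) / κ ^ k`, with the product of the hypergeometric
factors replaced by an arbitrary `h`. -/
noncomputable def besselIntegrand (κ : ℝ) (n : ℕ) (h : ℝ → ℝ) (ω u : ℝ) : ℝ :=
  (u ^ (n - 1) / Gamma n) * ((ω + √(ω ^ 2 - 1)) / (ω + u + √((ω + u) ^ 2 - 1))) ^ κ *
    (1 / (u + ω) ^ n) * h (1 / (u + ω) ^ 2)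

theorem mul_besselIntegrand_mul {ω v : ℝ} (hω : 0 < ω) (hv : 0 ≤ v) (κ : ℝ) (m : ℕ)
    (h : ℝ → ℝ) :
    ω * besselIntegrand κ (m + 1) h ω (ω * v) =
      v ^ m * (1 + v) ^ (-(m + 1 + κ)) / Gamma (m + 1) *
        (expArcoshDiv ω / expArcoshDiv (ω * (1 + v))) ^ κ * h (1 / (ω * (1 + v)) ^ 2) := by
  have h1v : 0 < 1 + v := by linarith
  have hy : 0 < ω * (1 + v) := by positivity
  have hratio : (ω + √(ω ^ 2 - 1)) / (ω + ω * v + √((ω + ω * v) ^ 2 - 1)) =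
      expArcoshDiv ω / expArcoshDiv (ω * (1 + v)) * (1 + v)⁻¹ := by
    rw [expArcoshDiv, expArcoshDiv, show ω + ω * v = ω * (1 + v) by ring]
    have : 0 < ω * (1 + v) + √((ω * (1 + v)) ^ 2 - 1) := by
      linarith [Real.sqrt_nonneg ((ω * (1 + v)) ^ 2 - 1)]
    field_simp
  have hpow : (1 + v) ^ (-(m + 1 + κ)) = ((1 + v) ^ (m + 1))⁻¹ * ((1 + v)⁻¹) ^ κ := by
    rw [Real.inv_rpow h1v.le, ← Real.rpow_neg h1v.le, ← Real.rpow_natCast, ← Real.rpow_neg h1v.le,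
      ← Real.rpow_add h1v]
    push_cast
    ring_nf
  rw [besselIntegrand, Nat.add_sub_cancel, hratio, Real.mul_rpow
    (div_nonneg (by linarith [one_le_expArcoshDiv hω]) (by linarith [one_le_expArcoshDiv hy]))
    (by positivity), hpow, show ω * v + ω = ω * (1 + v) by ring]
  simp only [mul_pow, Nat.cast_add, Nat.cast_one]
  field_simp
  ring

theorem tendsto_mul_besselIntegrand_mul (κ : ℝ) (m : ℕ) {h : ℝ → ℝ} {c : ℝ} (hc : 0 < c)
    (hh : ContinuousWithinAt h (Icc 0 c) 0) {v : ℝ} (hv : 0 ≤ v) :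
    Tendsto (fun ω => ω * besselIntegrand κ (m + 1) h ω (ω * v)) atTop
      (𝓝 (v ^ m * (1 + v) ^ (-(m + 1 + κ)) / Gamma (m + 1) * h 0)) := by
  have h1v : 0 < 1 + v := by linarith
  have hy : Tendsto (fun ω : ℝ => ω * (1 + v)) atTop atTop := tendsto_id.atTop_mul_const h1v
  have hz : Tendsto (fun ω : ℝ => 1 / (ω * (1 + v)) ^ 2) atTop (𝓝[Icc 0 c] 0) := by
    refine tendsto_nhdsWithin_iff.2 ⟨?_, ?_⟩
    · simpa only [one_div, Function.comp_def] using
        tendsto_inv_atTop_zero.comp ((tendsto_pow_atTop two_ne_zero).comp hy)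
    · filter_upwards [hy.eventually_ge_atTop 1, hy.eventually_ge_atTop c⁻¹] with ω h1 h2
      exact one_div_sq_mem_Icc hc h1 h2
  have hlim := ((tendsto_const_nhds (x := v ^ m * (1 + v) ^ (-(m + 1 + κ)) / Gamma (m + 1))).mul
    ((tendsto_expArcoshDiv_div_expArcoshDiv_mul h1v).rpow_const (p := κ) (Or.inl one_ne_zero))).mul
      (hh.tendsto.comp hz)
  rw [Real.one_rpow, mul_one] at hlim
  refine hlim.congr' ?_
  filter_upwards [eventually_gt_atTop 0] with ω hω
  exact (mul_besselIntegrand_mul hω hv κ m h).symm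

theorem norm_mul_besselIntegrand_mul_le {κ : ℝ} (hκ : 0 ≤ κ) (m : ℕ) {h : ℝ → ℝ} {c C : ℝ}
    (hc : 0 < c) (hC : ∀ z ∈ Icc 0 c, ‖h z‖ ≤ C) {ω v : ℝ} (hω : 1 ≤ ω) (hωc : c⁻¹ ≤ ω)
    (hv : 0 ≤ v) :
    ‖ω * besselIntegrand κ (m + 1) h ω (ω * v)‖ ≤
      2 ^ κ * C / Gamma (m + 1) * (v ^ m * (1 + v) ^ (-(m + 1 + κ))) := by
  have hω0 : 0 < ω := by linarith
  have hy1 : 1 ≤ ω * (1 + v) := by nlinarith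
  have hyc : c⁻¹ ≤ ω * (1 + v) := by nlinarith
  have hqω := one_le_expArcoshDiv hω0
  have hqy := one_le_expArcoshDiv (by linarith : 0 < ω * (1 + v))
  have hR0 : 0 ≤ expArcoshDiv ω / expArcoshDiv (ω * (1 + v)) := by positivity
  have hR : ‖(expArcoshDiv ω / expArcoshDiv (ω * (1 + v))) ^ κ‖ ≤ 2 ^ κ := by
    rw [Real.norm_of_nonneg (by positivity)]
    refine Real.rpow_le_rpow hR0 (div_le_of_le_mul₀ (by linarith) zero_le_two ?_) hκ
    nlinarith [expArcoshDiv_le_two hω0]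
  have hA : 0 ≤ v ^ m * (1 + v) ^ (-(m + 1 + κ)) / Gamma (m + 1) := by
    have : 0 < 1 + v := by linarith
    have := Real.Gamma_pos_of_pos (by positivity : (0 : ℝ) < m + 1)
    positivity
  rw [mul_besselIntegrand_mul hω0 hv, norm_mul, norm_mul, Real.norm_of_nonneg hA]
  calc _ ≤ v ^ m * (1 + v) ^ (-(m + 1 + κ)) / Gamma (m + 1) * 2 ^ κ * C := by
        gcongr
        exact hC _ (one_div_sq_mem_Icc hc hy1 hyc)
    _ = _ := by ring

theorem continuousOn_mul_besselIntegrand_mul (κ : ℝ) (m : ℕ) {h : ℝ → ℝ} {c : ℝ} (hc : 0 < c)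
    (hh : ContinuousOn h (Icc 0 c)) {ω : ℝ} (hω : 1 ≤ ω) (hωc : c⁻¹ ≤ ω) :
    ContinuousOn (fun v => ω * besselIntegrand κ (m + 1) h ω (ω * v)) (Ioi 0) := by
  have hω0 : 0 < ω := by linarith
  refine ContinuousOn.congr ?_ fun v hv => mul_besselIntegrand_mul hω0 (le_of_lt hv) κ m h
  have hy : ∀ v ∈ Ioi (0 : ℝ), 1 ≤ ω * (1 + v) ∧ c⁻¹ ≤ ω * (1 + v) := fun v hv => by
    have : 0 < v := hv
    constructor <;> nlinarith
  have hq : ∀ v ∈ Ioi (0 : ℝ), 1 ≤ expArcoshDiv (ω * (1 + v)) := fun v hv =>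
    one_le_expArcoshDiv (by linarith [hy v hv])
  have hycont : ContinuousOn (fun v : ℝ => ω * (1 + v)) (Ioi 0) := by fun_prop
  refine ((((continuousOn_pow_mul_one_add_rpow m _).div_const _).mul
    ((continuousOn_const.div (continuousOn_expArcoshDiv.comp hycont ?_) ?_).rpow_const ?_)).mul
    (hh.comp (continuousOn_const.div (hycont.pow 2) ?_) ?_))
  · exact fun v hv => mem_Ioi.2 (by linarith [hy v hv])
  · exact fun v hv => (show expArcoshDiv (ω * (1 + v)) ≠ 0 by linarith [hq v hv])
  · exact fun v hv => Or.inl (show expArcoshDiv ω / expArcoshDiv (ω * (1 + v)) ≠ 0 by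
      have := one_le_expArcoshDiv hω0
      have := hq v hv
      positivity)
  · exact fun v hv => pow_ne_zero 2 (by linarith [hy v hv])
  · exact fun v hv => one_div_sq_mem_Icc hc (hy v hv).1 (hy v hv).2

theorem tendsto_integral_besselIntegrand {κ : ℝ} (hκ : 0 < κ) {n : ℕ} (hn : n ≠ 0) {h : ℝ → ℝ}
    {c : ℝ} (hc : 0 < c) (hh : ContinuousOn h (Icc 0 c)) :
    Tendsto (fun ω => ∫ u in Ioi (0 : ℝ), besselIntegrand κ n h ω u) atTop
      (𝓝 (Gamma κ / Gamma (κ + n) * h 0)) := by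
  obtain ⟨m, rfl⟩ := Nat.exists_eq_add_one_of_ne_zero hn
  obtain ⟨C, hC⟩ := isCompact_Icc.exists_bound_of_continuousOn hh
  have hlarge : ∀ᶠ ω : ℝ in atTop, 1 ≤ ω ∧ c⁻¹ ≤ ω :=
    (eventually_ge_atTop 1).and (eventually_ge_atTop c⁻¹)
  have hlim := tendsto_integral_filter_of_dominated_convergence
    (fun v => 2 ^ κ * C / Gamma (m + 1) * (v ^ m * (1 + v) ^ (-(m + 1 + κ))))
    (hlarge.mono fun ω hω => (continuousOn_mul_besselIntegrand_mul κ m hc hh hω.1 hω.2)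
      |>.aestronglyMeasurable measurableSet_Ioi)
    (hlarge.mono fun ω hω => (ae_restrict_mem measurableSet_Ioi).mono fun v hv =>
      norm_mul_besselIntegrand_mul_le hκ.le m hc hC hω.1 hω.2 (le_of_lt hv))
    ((integrableOn_pow_mul_one_add_rpow m hκ).const_mul _)
    ((ae_restrict_mem measurableSet_Ioi).mono fun v hv =>
      tendsto_mul_besselIntegrand_mul κ m hc (hh 0 ⟨le_rfl, hc.le⟩) (le_of_lt hv))
  rw [integral_mul_const, integral_div, integral_pow_mul_one_add_rpow m hκ,
    Real.Gamma_nat_eq_factorial,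
    show (m : ℝ) + 1 + κ = κ + (m + 1 : ℕ) by push_cast; ring,
    mul_div_assoc, mul_div_cancel_left₀ _ (by positivity : (m ! : ℝ) ≠ 0)] at hlim
  refine hlim.congr' ?_
  filter_upwards [eventually_gt_atTop 0] with ω hω
  rw [integral_const_mul, integral_comp_mul_left_Ioi (besselIntegrand κ (m + 1) h ω) 0 hω,
    mul_zero, smul_eq_mul, mul_inv_cancel_left₀ hω.ne']

/-- As `ω → +∞`, the eppf `p_B(n_1,…,n_k; ω, κ)` of the normalized Bessel
random measure converges to the eppf `p_D(n_1,…,n_k; κ)` of the Dirichlet process with total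
mass `κ`. -/
theorem eppf_bessel_tendsto_dirichlet
    (κ : ℝ) (hκ : 0 < κ)
    (k : ℕ) (hk : 1 ≤ k) (nv : Fin k → ℕ) (hnv : ∀ j, 1 ≤ nv j)
    (n : ℕ) (hn : n = ∑ j, nv j) :
    Filter.Tendsto
      (fun ω : ℝ =>
        κ ^ k *
          ∫ u in Set.Ioi (0:ℝ),
            (u ^ (n - 1) / Real.Gamma n) *
              ((ω + Real.sqrt (ω ^ 2 - 1)) /
                  (ω + u + Real.sqrt ((ω + u) ^ 2 - 1))) ^ κ *
              (1 / (u + ω) ^ n) *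
              ∏ j, Real.Gamma (nv j) *
                hyp2F1one ((nv j : ℝ) / 2) (((nv j : ℝ) + 1) / 2) (1 / (u + ω) ^ 2))
      Filter.atTop
      (𝓝 (Real.Gamma κ / Real.Gamma (κ + n) * κ ^ k * ∏ j, Real.Gamma (nv j))) := by
  have hparam : ∀ {x : ℝ}, 0 < x → ∀ i : ℕ, x ≠ -i := fun hx i =>
    ((neg_nonpos.2 i.cast_nonneg).trans_lt hx).ne'
  have ha : ∀ j, ∀ i : ℕ, (nv j : ℝ) / 2 ≠ -i := fun j =>
    hparam (half_pos (Nat.cast_pos.2 (hnv j)))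
  have hb : ∀ j, ∀ i : ℕ, ((nv j : ℝ) + 1) / 2 ≠ -i := fun j => hparam (by positivity)
  have hn0 : n ≠ 0 := hn ▸ (Finset.sum_pos (fun j _ => hnv j) ⟨⟨0, hk⟩, Finset.mem_univ _⟩).ne'
  have hcont : ContinuousOn (fun z => ∏ j, Gamma (nv j) *
      hyp2F1one ((nv j : ℝ) / 2) (((nv j : ℝ) + 1) / 2) z) (Icc 0 (1 / 2)) :=
    continuousOn_finsetProd _ fun j _ => continuousOn_const.mul
      ((continuousOn_hyp2F1one (ha j) (hb j)).mono fun z hz => by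
        rw [Metric.mem_ball, Real.dist_0_eq_abs, abs_of_nonneg hz.1]
        linarith [hz.2])
  have hlim := (tendsto_integral_besselIntegrand hκ hn0 one_half_pos hcont).const_mul (κ ^ k)
  simp only [hyp2F1one_zero (ha _) (hb _), mul_one] at hlim
  rw [show Gamma κ / Gamma (κ + n) * κ ^ k * ∏ j, Gamma (nv j) =
    κ ^ k * (Gamma κ / Gamma (κ + n) * ∏ j, Gamma (nv j)) by ring]
  exact hlim
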